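/- arXiv:1611.04115 — 4 statements merged into one kernel-verified Lean document; each statement's English description precedes it below -/
import Mathlib

section
/- Let K be a global field (a field with a set of places satisfying the product formula), f, c ∈ K[x] with deg f > 1, and let (λ_n) be a sequence in the algebraic closure of K satisfying f^∘n(λ_n) = c(λ_n) for all n. Then the canonical heights ĥ_f(λ_n) tend to 0 as n → ∞. -/
open Polynomial

noncomputable def polyIter {R : Type*} [CommSemiring R] (q : Polynomial R) (n : ℕ) :
    Polynomial R := (q.comp)^[n] X

lemma polyIter_canon {K : Type*} [Field K] [CharZero K] (f : Polynomial K)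
    (hcanon : AlgebraicClosure K → ℝ)
    (hfunc : ∀ x : AlgebraicClosure K,
      hcanon (Polynomial.aeval x f) = (f.natDegree : ℝ) * hcanon x)
    (x : AlgebraicClosure K) (n : ℕ) :
    hcanon (Polynomial.aeval x (polyIter f n)) = (f.natDegree : ℝ) ^ n * hcanon x := by
  induction n with
  | zero => simp [polyIter]
  | succ n ih =>
      have : polyIter f (n + 1) = f.comp (polyIter f n) := by
        simp [polyIter, Function.iterate_succ_apply']
      rw [this, Polynomial.aeval_comp, hfunc, ih, pow_succ]
      ring

/-- If `hcanon` is the canonical height associated to `f` (characterized by the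
functional equation `ĥ_f(f(x)) = (deg f)·ĥ_f(x)` and `ĥ_f(c(x)) = (deg c)·ĥ_f(x) + O(1)`),
and `f^∘n(λ_n) = c(λ_n)` for all `n`, then `ĥ_f(λ_n) → 0`. -/
theorem stmt8 {K : Type*} [Field K] [CharZero K] (f c : Polynomial K)
    (hdeg : 1 < f.natDegree)
    (hcanon : AlgebraicClosure K → ℝ)
    (hfunc : ∀ x : AlgebraicClosure K,
      hcanon (Polynomial.aeval x f) = (f.natDegree : ℝ) * hcanon x)
    (hcbound : ∃ C : ℝ, ∀ x : AlgebraicClosure K,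
      |hcanon (Polynomial.aeval x c) - (c.natDegree : ℝ) * hcanon x| ≤ C)
    (lam : ℕ → AlgebraicClosure K)
    (hlam : ∀ n : ℕ, 0 < n →
      Polynomial.aeval (lam n) (polyIter f n) = Polynomial.aeval (lam n) c) :
    Filter.Tendsto (fun n => hcanon (lam n)) Filter.atTop (nhds 0) := by
  obtain ⟨C, hC⟩ := hcbound
  set d : ℝ := (f.natDegree : ℝ) with hd
  set e : ℝ := (c.natDegree : ℝ) with he
  have hd1 : (1 : ℝ) < d := by rw [hd]; exact_mod_cast hdeg
  -- key bound: |(d^n - e) * hcanon (lam n)| ≤ C for n ≥ 1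
  have key : ∀ n : ℕ, 0 < n → |(d ^ n - e) * hcanon (lam n)| ≤ C := by
    intro n hn
    have h1 : hcanon (Polynomial.aeval (lam n) c) = d ^ n * hcanon (lam n) := by
      rw [← hlam n hn]; exact polyIter_canon f hcanon hfunc (lam n) n
    have h2 := hC (lam n)
    rw [h1] at h2
    calc |(d ^ n - e) * hcanon (lam n)|
        = |d ^ n * hcanon (lam n) - e * hcanon (lam n)| := by ring_nf
      _ ≤ C := h2
  -- d^n - e tends to atTop
  have hpow : Filter.Tendsto (fun n : ℕ => d ^ n - e) Filter.atTop Filter.atTop :=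
    Filter.tendsto_atTop_add_const_right _ (-e) (tendsto_pow_atTop_atTop_of_one_lt hd1)
  have hg : Filter.Tendsto (fun n : ℕ => C / (d ^ n - e)) Filter.atTop (nhds 0) :=
    Filter.Tendsto.div_atTop tendsto_const_nhds hpow
  apply squeeze_zero_norm' _ hg
  have hev : ∀ᶠ n : ℕ in Filter.atTop, 0 < n ∧ 0 < d ^ n - e := by
    filter_upwards [Filter.eventually_gt_atTop 0, hpow.eventually_gt_atTop 0] with n h1 h2
    exact ⟨h1, h2⟩
  filter_upwards [hev] with n ⟨hn, hpos⟩
  have hk := key n hn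
  rw [abs_mul, abs_of_pos hpos] at hk
  rw [Real.norm_eq_abs, le_div_iff₀ hpos, mul_comm]
  exact hk
end

section
/- Let K be a number field, f ∈ K[x] a polynomial with deg f > 1, and c ∈ K[x]. If there exist infinite nonrepeating sequences (λ_i) in the algebraic closure of K of bounded degree over K and positive integers (n_i) with n_i → ∞ such that f^∘n_i(λ_i) = c(λ_i) for all i, then a contradiction follows; that is, there are only finitely many λ of degree ≤ D over K satisfying f^∘n(λ) = c(λ) for some n with f^∘n ≠ c. -/
open Polynomial

/-- Over a number field `K`, given the Weil height `h` on the algebraic closure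
(satisfying the Northcott property in bounded degree) and the canonical height
`hhat` attached to `f` (with `|hhat - h| = O(1)`, the functional equation for `f`,
and `hhat(c(x)) = (deg c)·hhat(x) + O(1)`), there are only finitely many `λ` of
degree at most `D` over `K` with `f^∘n(λ) = c(λ)` for some `n` with `f^∘n ≠ c`. -/
theorem stmt9 {K : Type*} [Field K] [NumberField K] (f c : Polynomial K)
    (hdeg : 1 < f.natDegree) (D : ℕ)
    (h hhat : AlgebraicClosure K → ℝ)
    (hNorthcott : ∀ B : ℝ,
      {x : AlgebraicClosure K | (minpoly K x).natDegree ≤ D ∧ h x ≤ B}.Finite)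
    (hcomp : ∃ C : ℝ, ∀ x : AlgebraicClosure K, |hhat x - h x| ≤ C)
    (hfunc : ∀ x : AlgebraicClosure K,
      hhat (Polynomial.aeval x f) = (f.natDegree : ℝ) * hhat x)
    (hcbound : ∃ C : ℝ, ∀ x : AlgebraicClosure K,
      |hhat (Polynomial.aeval x c) - (c.natDegree : ℝ) * hhat x| ≤ C) :
    {lam : AlgebraicClosure K | (minpoly K lam).natDegree ≤ D ∧
      ∃ n : ℕ, 0 < n ∧ polyIter f n ≠ c ∧
        Polynomial.aeval lam (polyIter f n) = Polynomial.aeval lam c}.Finite := by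
  classical
  obtain ⟨C1, hC1⟩ := hcomp
  obtain ⟨C2, hC2⟩ := hcbound
  -- iterated functional equation
  have hiter : ∀ (n : ℕ) (x : AlgebraicClosure K),
      hhat (aeval x (polyIter f n)) = (f.natDegree : ℝ) ^ n * hhat x := by
    intro n
    induction n with
    | zero => intro x; simp [polyIter]
    | succ n ih =>
      intro x
      have hstep : polyIter f (n + 1) = f.comp (polyIter f n) := by
        simp [polyIter, Function.iterate_succ_apply']
      rw [hstep, aeval_comp, hfunc, ih, pow_succ]
      ring
  -- each "small n" root set is finite
  have hroots : ∀ n : ℕ,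
      {lam : AlgebraicClosure K | polyIter f n ≠ c ∧
        aeval lam (polyIter f n) = aeval lam c}.Finite := by
    intro n
    by_cases hne : polyIter f n = c
    · convert Set.finite_empty
      ext x; simp [hne]
    · have hp : polyIter f n - c ≠ 0 := sub_ne_zero.mpr hne
      have hmap : (polyIter f n - c).map (algebraMap K (AlgebraicClosure K)) ≠ 0 :=
        (Polynomial.map_ne_zero_iff (algebraMap K (AlgebraicClosure K)).injective).mpr hp
      apply Set.Finite.subset
        (((polyIter f n - c).map (algebraMap K (AlgebraicClosure K))).roots.toFinset :
          Set (AlgebraicClosure K)).toFinite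
      intro x hx
      obtain ⟨-, hx⟩ := hx
      have hr : ((polyIter f n - c).map (algebraMap K (AlgebraicClosure K))).IsRoot x := by
        rw [IsRoot.def, eval_map, ← aeval_def, map_sub, hx, sub_self]
      rw [Finset.mem_coe, Multiset.mem_toFinset, mem_roots hmap]
      exact hr
  apply Set.Finite.subset
    ((hNorthcott (C2 + C1)).union
      (Set.Finite.biUnion (Finset.range (c.natDegree + 1)).finite_toSet
        (fun n _ => hroots n)))
  rintro lam ⟨hdegD, n, hn, hne, heq⟩
  by_cases hbig : c.natDegree < f.natDegree ^ n
  · -- bounded height case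
    left
    refine ⟨hdegD, ?_⟩
    have key : |((f.natDegree : ℝ) ^ n - (c.natDegree : ℝ)) * hhat lam| ≤ C2 := by
      have := hC2 lam
      rw [← heq, hiter n lam] at this
      have : |(f.natDegree : ℝ) ^ n * hhat lam - (c.natDegree : ℝ) * hhat lam| ≤ C2 := this
      calc |((f.natDegree : ℝ) ^ n - (c.natDegree : ℝ)) * hhat lam|
          = |(f.natDegree : ℝ) ^ n * hhat lam - (c.natDegree : ℝ) * hhat lam| := by ring_nf
        _ ≤ C2 := this
    have hone : (1 : ℝ) ≤ (f.natDegree : ℝ) ^ n - (c.natDegree : ℝ) := by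
      have : (c.natDegree : ℝ) + 1 ≤ (f.natDegree : ℝ) ^ n := by
        exact_mod_cast Nat.succ_le_of_lt hbig
      linarith
    have hlam : |hhat lam| ≤ C2 := by
      rw [abs_mul] at key
      nlinarith [abs_nonneg (hhat lam), abs_le.mp (le_refl |((f.natDegree : ℝ) ^ n - (c.natDegree : ℝ))|)]
    have := hC1 lam
    have h1 := abs_le.mp this
    have h2 := abs_le.mp hlam
    linarith
  · -- small n case
    right
    push_neg at hbig
    have hn2 : n < 2 ^ n := Nat.lt_two_pow_self (n := n)
    have : 2 ^ n ≤ f.natDegree ^ n := Nat.pow_le_pow_left hdeg n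
    have hnle : n ≤ c.natDegree := by omega
    refine Set.mem_biUnion ?_ ⟨hne, heq⟩
    simp [Nat.lt_succ_of_le hnle]
end

section
/- Let k be a number field and w_1, w_2 ∈ k multiplicatively independent elements, neither a root of unity, and y ∈ k nonzero. Then for all but finitely many positive integers n, the elements w_1^n / y and w_2^n / y are multiplicatively independent. -/
/-- Auxiliary: extracting the core relation from a bad `n`. -/
lemma stmt12_aux {k : Type*} [Field k] (w₁ w₂ y : k)
    (hy : y ≠ 0) {n : ℕ} {i j : ℤ}
    (h : (w₁ ^ n / y) ^ i * (w₂ ^ n / y) ^ j = 1) :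
    w₁ ^ ((n : ℤ) * i) * w₂ ^ ((n : ℤ) * j) = y ^ (i + j) := by
  have hyi : y ^ i ≠ 0 := zpow_ne_zero _ hy
  have hyj : y ^ j ≠ 0 := zpow_ne_zero _ hy
  rw [div_zpow, div_zpow, div_mul_div_comm, div_eq_one_iff_eq (mul_ne_zero hyi hyj)] at h
  rw [zpow_mul, zpow_mul, zpow_natCast, zpow_natCast] at *
  rw [h, zpow_add₀ hy]

/-- If `w₁, w₂` are multiplicatively independent elements of a number field `k`,
neither a root of unity, and `y ∈ k` is nonzero, then for all but finitely many
positive integers `n`, the elements `w₁^n / y` and `w₂^n / y` are multiplicatively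
independent. -/
theorem stmt12 {k : Type*} [Field k] [NumberField k] (w₁ w₂ y : k)
    (hw₁ : w₁ ≠ 0) (hw₂ : w₂ ≠ 0) (hy : y ≠ 0)
    (hindep : ∀ i j : ℤ, w₁ ^ i * w₂ ^ j = 1 → i = 0 ∧ j = 0)
    (h₁ : ∀ m : ℕ, 0 < m → w₁ ^ m ≠ 1) (h₂ : ∀ m : ℕ, 0 < m → w₂ ^ m ≠ 1) :
    {n : ℕ | 0 < n ∧
      ¬ ∀ i j : ℤ, (w₁ ^ n / y) ^ i * (w₂ ^ n / y) ^ j = 1 → i = 0 ∧ j = 0}.Finite := by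
  by_cases hcase : ∃ a b c : ℤ, c ≠ 0 ∧ w₁ ^ a * w₂ ^ b = y ^ c
  · obtain ⟨a, b, c, hc, habc⟩ := hcase
    apply Set.Finite.subset (Set.finite_singleton ((a + b) / c).toNat)
    intro n hn
    obtain ⟨hnpos, hbad⟩ := hn
    push_neg at hbad
    obtain ⟨i, j, hrel, hij⟩ := hbad
    have key := stmt12_aux w₁ w₂ y hy hrel
    -- raise to power c
    have key2 : w₁ ^ ((n : ℤ) * i * c) * w₂ ^ ((n : ℤ) * j * c) = y ^ ((i + j) * c) := by
      rw [zpow_mul w₁ ((n : ℤ) * i) c, zpow_mul w₂ ((n : ℤ) * j) c,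
        zpow_mul y (i + j) c, ← mul_zpow, key]
    have key3 : w₁ ^ ((n : ℤ) * i * c - a * (i + j)) *
        w₂ ^ ((n : ℤ) * j * c - b * (i + j)) = 1 := by
      rw [zpow_sub₀ hw₁, zpow_sub₀ hw₂, div_mul_div_comm,
        div_eq_one_iff_eq (mul_ne_zero (zpow_ne_zero _ hw₁) (zpow_ne_zero _ hw₂)),
        key2, mul_comm (i + j) c, zpow_mul y c (i + j), ← habc, mul_zpow,
        ← zpow_mul, ← zpow_mul]
    obtain ⟨e1, e2⟩ := hindep _ _ key3
    rw [sub_eq_zero] at e1 e2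
    have hsum : i + j ≠ 0 := by
      intro h0
      rw [h0, mul_zero] at e1 e2
      rcases mul_eq_zero.1 e1 with h' | h'
      · rcases mul_eq_zero.1 h' with h'' | h''
        · exact absurd h'' (by exact_mod_cast hnpos.ne')
        · have : j = 0 := by omega
          exact hij h'' this
      · exact hc h'
    have hnc : (n : ℤ) * c = a + b := by
      have : ((n : ℤ) * c) * (i + j) = (a + b) * (i + j) := by ring_nf; nlinarith [e1, e2]
      exact mul_right_cancel₀ hsum this
    have : (n : ℤ) = (a + b) / c := by
      rw [← hnc, Int.mul_ediv_cancel _ hc]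
    simp only [Set.mem_singleton_iff]
    omega
  · -- no relation at all: the bad set is empty
    convert Set.finite_empty
    ext n
    simp only [Set.mem_setOf_eq, Set.mem_empty_iff_false, iff_false, not_and, not_not]
    intro hnpos i j hrel
    have key := stmt12_aux w₁ w₂ y hy hrel
    have hsum : i + j = 0 := by
      by_contra h0
      exact hcase ⟨(n : ℤ) * i, (n : ℤ) * j, i + j, h0, key⟩
    rw [hsum, zpow_zero] at key
    obtain ⟨e1, e2⟩ := hindep _ _ key
    have hn0 : (n : ℤ) ≠ 0 := by exact_mod_cast hnpos.ne'
    constructor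
    · exact (mul_eq_zero.1 e1).resolve_left hn0
    · exact (mul_eq_zero.1 e2).resolve_left hn0
end

section
/- Let q ∈ ℂ[x] with deg q ≥ 2 and let c(x) ∈ ℂ[x] be a polynomial that is not equal to a constant lying in a ramified cycle of q. Then for each λ ∈ ℂ there exists a constant M (depending on λ, q, c) such that for all n with q^∘n(x) ≠ c(x), the order of vanishing of q^∘n(x) - c(x) at λ is at most M. -/
open Polynomial

section Aux

lemma polyIter_zero (q : Polynomial ℂ) : polyIter q 0 = X := rfl

lemma polyIter_one (q : Polynomial ℂ) : polyIter q 1 = q := by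
  simp [polyIter]

lemma polyIter_succ (q : Polynomial ℂ) (n : ℕ) :
    polyIter q (n + 1) = q.comp (polyIter q n) :=
  Function.iterate_succ_apply' _ _ _

lemma polyIter_add (q : Polynomial ℂ) (a b : ℕ) :
    polyIter q (a + b) = (polyIter q a).comp (polyIter q b) := by
  induction a with
  | zero => simp [polyIter_zero]
  | succ a ih =>
    rw [show a + 1 + b = (a + b) + 1 by omega, polyIter_succ, ih, polyIter_succ,
      comp_assoc]

lemma polyIter_succ' (q : Polynomial ℂ) (n : ℕ) :
    polyIter q (n + 1) = (polyIter q n).comp q := by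
  rw [polyIter_add q n 1, polyIter_one]

lemma polyIter_mul (q : Polynomial ℂ) (a b : ℕ) :
    polyIter q (a * b) = polyIter (polyIter q a) b := by
  induction b with
  | zero => simp [polyIter_zero]
  | succ b ih =>
    rw [show a * (b + 1) = a * b + a by ring, polyIter_add, ih, polyIter_succ' (polyIter q a) b]

lemma polyIter_natDegree (q : Polynomial ℂ) (n : ℕ) :
    (polyIter q n).natDegree = q.natDegree ^ n := by
  induction n with
  | zero => simp [polyIter_zero]
  | succ n ih => rw [polyIter_succ, natDegree_comp, ih, pow_succ']

lemma polyIter_ne_C {q : Polynomial ℂ} (hq : 2 ≤ q.natDegree) {n : ℕ} (hn : 0 < n) (a : ℂ) :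
    polyIter q n ≠ C a := by
  intro h
  have h2 := congrArg natDegree h
  rw [polyIter_natDegree, natDegree_C] at h2
  have h3 : 2 ≤ q.natDegree ^ n := le_trans hq (Nat.le_self_pow hn.ne' _)
  omega

lemma polyIter_ne_X {q : Polynomial ℂ} (hq : 2 ≤ q.natDegree) {n : ℕ} (hn : 0 < n) :
    polyIter q n ≠ X := by
  intro h
  have h2 := congrArg natDegree h
  rw [polyIter_natDegree, natDegree_X] at h2
  have h3 : 2 ≤ q.natDegree ^ n := le_trans hq (Nat.le_self_pow hn.ne' _)
  omega

lemma polyIter_ne_polyIter {q : Polynomial ℂ} (hq : 2 ≤ q.natDegree) {a b : ℕ} (hab : a ≠ b) :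
    polyIter q a ≠ polyIter q b := by
  intro h
  have h2 := congrArg natDegree h
  rw [polyIter_natDegree, polyIter_natDegree] at h2
  exact hab (Nat.pow_right_injective hq h2)

lemma polyIter_eval_fixed {g : Polynomial ℂ} {t : ℂ} (h0 : g.eval t = t) (k : ℕ) :
    (polyIter g k).eval t = t := by
  induction k with
  | zero => simp [polyIter_zero]
  | succ k ih => rw [polyIter_succ, eval_comp, ih, h0]

lemma deriv_polyIter_eval {g : Polynomial ℂ} {t : ℂ} (h0 : g.eval t = t) (k : ℕ) :
    (polyIter g k).derivative.eval t = (g.derivative.eval t) ^ k := by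
  induction k with
  | zero => simp [polyIter_zero]
  | succ k ih =>
    rw [polyIter_succ', derivative_comp, eval_mul, eval_comp, h0, ih, pow_succ']

lemma rootMultiplicity_pow' {p : Polynomial ℂ} (hp : p ≠ 0) (a : ℂ) (k : ℕ) :
    rootMultiplicity a (p ^ k) = k * rootMultiplicity a p := by
  induction k with
  | zero =>
    simp only [pow_zero, zero_mul]
    exact rootMultiplicity_eq_zero (by simp [IsRoot])
  | succ k ih =>
    rw [pow_succ, rootMultiplicity_mul (mul_ne_zero (pow_ne_zero _ hp) hp), ih]
    ring

lemma rootMultiplicity_comp (A Q : Polynomial ℂ) (hAQ : A.comp Q ≠ 0) (a : ℂ) :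
    rootMultiplicity a (A.comp Q)
      = rootMultiplicity (Q.eval a) A * rootMultiplicity a (Q - C (Q.eval a)) := by
  set b := Q.eval a with hb
  have hA : A ≠ 0 := fun h => hAQ (by simp [h])
  set k := rootMultiplicity b A with hk
  set R := A /ₘ (X - C b) ^ k with hR
  have hdecomp : (X - C b) ^ k * R = A := pow_mul_divByMonic_rootMultiplicity_eq A b
  have hRb : R.eval b ≠ 0 := eval_divByMonic_pow_rootMultiplicity_ne_zero b hA
  have hcomp : A.comp Q = (Q - C b) ^ k * (R.comp Q) := by
    conv_lhs => rw [← hdecomp]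
    rw [mul_comp, pow_comp, sub_comp, X_comp, C_comp]
  rw [hcomp] at hAQ ⊢
  have hQb : Q - C b ≠ 0 ∨ k = 0 := by
    by_cases h : k = 0
    · exact Or.inr h
    · left
      intro h0
      apply hAQ
      rw [h0, zero_pow h, zero_mul]
  rw [rootMultiplicity_mul hAQ]
  have h2 : rootMultiplicity a (R.comp Q) = 0 := by
    apply rootMultiplicity_eq_zero
    simp only [IsRoot, eval_comp, ← hb]
    exact hRb
  rcases hQb with h | h
  · rw [rootMultiplicity_pow' h, h2, add_zero]
  · rw [h, pow_zero]
    have : rootMultiplicity a (1 : Polynomial ℂ) = 0 :=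
      rootMultiplicity_eq_zero (by simp [IsRoot])
    rw [this, h2, zero_mul]
    simp

lemma rm_eq_of_decomp {p u : Polynomial ℂ} {a : ℂ} {n : ℕ}
    (hp : p = (X - C a) ^ n * u) (hu : u.eval a ≠ 0) :
    rootMultiplicity a p = n := by
  have hu0 : u ≠ 0 := fun h => hu (by simp [h])
  have hne : ((X - C a) ^ n * u : Polynomial ℂ) ≠ 0 :=
    mul_ne_zero (pow_ne_zero _ (X_sub_C_ne_zero a)) hu0
  rw [hp, rootMultiplicity_mul hne, rootMultiplicity_X_sub_C_pow,
    rootMultiplicity_eq_zero (by simpa [IsRoot] using hu), add_zero]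

lemma rm_le_one {p : Polynomial ℂ} {a : ℂ} (h : p.derivative.eval a ≠ 0) :
    rootMultiplicity a p ≤ 1 := by
  by_contra hc
  push_neg at hc
  have hp : p ≠ 0 := by
    intro h0
    rw [h0, rootMultiplicity_zero] at hc
    omega
  have := (lt_rootMultiplicity_iff_isRoot_iterate_derivative hp).mp hc 1 le_rfl
  simp only [Function.iterate_one, IsRoot] at this
  exact h this

lemma two_le_rm {p : Polynomial ℂ} {a : ℂ} (hp : p ≠ 0) (h0 : p.eval a = 0)
    (h1 : p.derivative.eval a = 0) : 2 ≤ rootMultiplicity a p := by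
  have : 1 < rootMultiplicity a p := by
    apply lt_rootMultiplicity_of_isRoot_iterate_derivative hp
    intro m hm
    interval_cases m
    · exact h0
    · simpa [IsRoot] using h1
  omega

end Aux

lemma parabolic {h : Polynomial ℂ} {t : ℂ} (hdeg : 2 ≤ h.natDegree)
    (h0 : h.eval t = t) (h1 : h.derivative.eval t = 1) :
    ∀ s : ℕ, 0 < s →
      rootMultiplicity t (polyIter h s - X) = rootMultiplicity t (h - X) := by
  have hhX : h - X ≠ 0 := sub_ne_zero.mpr (fun hEq => by
    have := congrArg natDegree hEq
    rw [natDegree_X] at this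
    omega)
  set m := rootMultiplicity t (h - X) with hm
  have hm2 : 2 ≤ m := two_le_rm hhX (by simp [h0]) (by simp [h1])
  set u := (h - X) /ₘ (X - C t) ^ m with hu
  have hdecomp : (X - C t) ^ m * u = h - X := pow_mul_divByMonic_rootMultiplicity_eq _ t
  have hut : u.eval t ≠ 0 := eval_divByMonic_pow_rootMultiplicity_ne_zero t hhX
  have hfact : h - C t = (X - C t) * (1 + (X - C t) ^ (m - 1) * u) := by
    have hmm : (X - C t) * (X - C t) ^ (m - 1) = (X - C t) ^ m := by
      rw [← pow_succ']
      congr 1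
      omega
    calc h - C t = (X - C t) + ((X - C t) ^ m * u) := by rw [hdecomp]; ring
    _ = (X - C t) * (1 + (X - C t) ^ (m - 1) * u) := by rw [mul_add, mul_one, ← mul_assoc, hmm]
  have key : ∀ s : ℕ, ∃ v : Polynomial ℂ,
      polyIter h (s + 1) - X = (X - C t) ^ m * v ∧ v.eval t = ((s : ℂ) + 1) * u.eval t := by
    intro s
    induction s with
    | zero => exact ⟨u, by rw [polyIter_one, hdecomp], by push_cast; ring⟩
    | succ s ih =>
      obtain ⟨v, hv, hvt⟩ := ih
      refine ⟨(1 + (X - C t) ^ (m - 1) * u) ^ m * (v.comp h) + u, ?_, ?_⟩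
      · have hstep : polyIter h (s + 2) - X = (polyIter h (s + 1) - X).comp h + (h - X) := by
          rw [show s + 2 = (s + 1) + 1 by omega, polyIter_succ', sub_comp, X_comp]
          ring
        rw [hstep, hv, mul_comp, pow_comp, sub_comp, X_comp, C_comp, hfact, mul_pow,
          ← hdecomp]
        ring
      · have hmne : m - 1 ≠ 0 := by omega
        simp only [eval_add, eval_mul, eval_pow, eval_comp, eval_one, eval_sub, eval_X, eval_C,
          sub_self, zero_pow hmne, zero_mul, add_zero, one_pow, one_mul, h0, hvt]
        push_cast
        ring
  intro s hs
  obtain ⟨s', rfl⟩ : ∃ s', s = s' + 1 := ⟨s - 1, by omega⟩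
  obtain ⟨v, hv, hvt⟩ := key s'
  refine rm_eq_of_decomp hv ?_
  rw [hvt]
  apply mul_ne_zero _ hut
  have h2 : ((s' + 1 : ℕ) : ℂ) ≠ 0 := Nat.cast_ne_zero.mpr (Nat.succ_ne_zero s')
  push_cast at h2
  exact h2

lemma exists_iter_fixed_rm_bound {g : Polynomial ℂ} {t : ℂ} (hgd : 2 ≤ g.natDegree)
    (hgt : g.eval t = t) :
    ∃ B : ℕ, ∀ k : ℕ, 0 < k → rootMultiplicity t (polyIter g k - X) ≤ B := by
  classical
  set μ := g.derivative.eval t with hμ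
  have hle1 : ∀ k : ℕ, μ ^ k ≠ 1 → rootMultiplicity t (polyIter g k - X) ≤ 1 := by
    intro k hk
    apply rm_le_one
    rw [derivative_sub, derivative_X, eval_sub, eval_one, deriv_polyIter_eval hgt]
    exact sub_ne_zero.mpr hk
  by_cases hroot1 : ∃ r : ℕ, 0 < r ∧ μ ^ r = 1
  · have hrspec := Nat.find_spec hroot1
    set r := Nat.find hroot1 with hr
    set h := polyIter g r with hH
    have hht : h.eval t = t := polyIter_eval_fixed hgt r
    have hh1 : h.derivative.eval t = 1 := by
      rw [hH, deriv_polyIter_eval hgt]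
      exact hrspec.2
    have hhd : 2 ≤ h.natDegree := by
      rw [hH, polyIter_natDegree]
      exact le_trans hgd (Nat.le_self_pow hrspec.1.ne' _)
    refine ⟨max 1 (rootMultiplicity t (h - X)), fun k hk => ?_⟩
    by_cases hrk : r ∣ k
    · obtain ⟨s, rfl⟩ := hrk
      have hs : 0 < s := Nat.pos_of_ne_zero (fun h0 => by simp [h0] at hk)
      rw [polyIter_mul, ← hH, parabolic hhd hht hh1 s hs]
      exact le_max_right _ _
    · refine le_trans (hle1 k ?_) (le_max_left _ _)
      intro hEq
      have h1 : μ ^ (r * (k / r)) = 1 := by rw [pow_mul, hrspec.2, one_pow]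
      have hmod : μ ^ (k % r) = 1 := by
        have h2 : μ ^ k = μ ^ (k % r) := by
          conv_lhs => rw [← Nat.div_add_mod k r]
          rw [pow_add, h1, one_mul]
        rw [← h2, hEq]
      have hlt : k % r < r := Nat.mod_lt k hrspec.1
      have hpos : 0 < k % r := Nat.pos_of_ne_zero (fun h0 => hrk (Nat.dvd_of_mod_eq_zero h0))
      exact Nat.find_min hroot1 hlt ⟨hpos, hmod⟩
  · push_neg at hroot1
    exact ⟨1, fun k hk => hle1 k (hroot1 k hk)⟩

/-- Let `q ∈ ℂ[x]` with `deg q ≥ 2` and `c(x) ∈ ℂ[x]` not equal to a constant lying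
in a ramified cycle of `q`.  Then for each `λ ∈ ℂ` there is a bound `M` such that
for all `n ≥ 1` with `q^∘n ≠ c`, the order of vanishing of `q^∘n(x) - c(x)` at `λ`
is at most `M`. -/
theorem stmt16 (q : Polynomial ℂ) (hq : 2 ≤ q.natDegree) (c : Polynomial ℂ)
    (hc : ¬ ∃ γ : ℂ, c = C γ ∧ ∃ i : ℕ, 0 < i ∧
      (polyIter q i).eval γ = γ ∧ (polyIter q i).derivative.eval γ = 0)
    (lam : ℂ) :
    ∃ M : ℕ, ∀ n : ℕ, 0 < n → polyIter q n ≠ c →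
      Polynomial.rootMultiplicity lam (polyIter q n - c) ≤ M := by
  classical
  set t := c.eval lam with ht
  have hrm0 : ∀ n : ℕ, (polyIter q n).eval lam ≠ t → rootMultiplicity lam (polyIter q n - c) = 0 := by
    intro n hn
    apply rootMultiplicity_eq_zero
    simp only [IsRoot, eval_sub, ← ht]
    exact sub_ne_zero.mpr hn
  by_cases hper : ∃ p : ℕ, 0 < p ∧ (polyIter q p).eval t = t
  · -- t is periodic; take minimal period p
    have hpspec := Nat.find_spec hper
    set p := Nat.find hper with hp
    obtain ⟨hp0, hpt⟩ := hpspec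
    set g := polyIter q p with hg
    have hgt : g.eval t = t := hpt
    have hgd : 2 ≤ g.natDegree := by
      rw [hg, polyIter_natDegree]
      exact le_trans hq (Nat.le_self_pow hp0.ne' _)
    have hfix : ∀ j : ℕ, (polyIter q (p * j)).eval t = t := by
      intro j
      rw [polyIter_mul, ← hg]
      exact polyIter_eval_fixed hgt j
    by_cases hS : ∃ n : ℕ, 0 < n ∧ (polyIter q n).eval lam = t
    · have hn0spec := Nat.find_spec hS
      set n0 := Nat.find hS with hn0
      obtain ⟨hn0pos, hn0t⟩ := hn0spec
      set f := polyIter q n0 with hf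
      have hft : f.eval lam = t := hn0t
      -- characterization of the hitting times
      have hchar : ∀ n : ℕ, 0 < n → (polyIter q n).eval lam = t → ∃ j : ℕ, n = p * j + n0 := by
        intro n hn hnt
        have hn0le : n0 ≤ n := Nat.find_min' hS ⟨hn, hnt⟩
        set k := n - n0 with hkdef
        have hk : (polyIter q k).eval t = t := by
          have h2 : (polyIter q (k + n0)).eval lam = t := by
            rw [show k + n0 = n by omega]
            exact hnt
          rwa [polyIter_add, eval_comp, ← hf, hft] at h2
        have hkr : (polyIter q (k % p)).eval t = t := by
          have h3 : (polyIter q (k % p + p * (k / p))).eval t = t := by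
            rw [Nat.mod_add_div]
            exact hk
          rwa [polyIter_add, eval_comp, hfix] at h3
        have hk0 : k % p = 0 := by
          by_contra h4
          exact Nat.find_min hper (Nat.mod_lt k hp0) ⟨Nat.pos_of_ne_zero h4, hkr⟩
        refine ⟨k / p, ?_⟩
        have := Nat.div_add_mod k p
        omega
      -- basic multiplicities
      have hfne : f - C t ≠ 0 := sub_ne_zero.mpr (polyIter_ne_C hq hn0pos t)
      set e := rootMultiplicity lam (f - C t) with he
      have he1 : 1 ≤ e := by
        rw [he]
        exact (rootMultiplicity_pos hfne).mpr (by simp [IsRoot, hft])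
      have hgne : g - C t ≠ 0 := sub_ne_zero.mpr (polyIter_ne_C hq hp0 t)
      set m := rootMultiplicity t (g - C t) with hm
      have hm1 : 1 ≤ m := by
        rw [hm]
        exact (rootMultiplicity_pos hgne).mpr (by simp [IsRoot, hgt])
      have hgiter_ne : ∀ j : ℕ, polyIter g j - C t ≠ 0 := by
        intro j
        apply sub_ne_zero.mpr
        cases j with
        | zero => exact X_ne_C t
        | succ j => exact polyIter_ne_C hgd (Nat.succ_pos j) t
      have hmj : ∀ j : ℕ, rootMultiplicity t (polyIter g j - C t) = m ^ j := by
        intro j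
        induction j with
        | zero =>
          simp only [pow_zero]
          rw [polyIter_zero]
          exact rootMultiplicity_X_sub_C_self
        | succ j ih =>
          have hrew : polyIter g (j + 1) - C t = (polyIter g j - C t).comp g := by
            rw [sub_comp, C_comp, ← polyIter_succ']
          rw [hrew, rootMultiplicity_comp _ _ (by rw [← hrew]; exact hgiter_ne (j + 1)), hgt,
            ih, ← hm, pow_succ]
      have hval : ∀ j : ℕ, rootMultiplicity lam (polyIter q (p * j + n0) - C t) = m ^ j * e := by
        intro j
        have hrew : polyIter q (p * j + n0) - C t = (polyIter g j - C t).comp f := by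
          rw [sub_comp, C_comp, polyIter_add, polyIter_mul, ← hg, ← hf]
        have hne2 : (polyIter g j - C t).comp f ≠ 0 := by
          rw [← hrew]
          exact sub_ne_zero.mpr (polyIter_ne_C hq (by omega) t)
        rw [hrew, rootMultiplicity_comp _ _ hne2, hft, hmj j, ← he]
      by_cases hm2 : 2 ≤ m
      · -- ramified cycle case: c is not the constant C t
        have hgram : g.derivative.eval t = 0 := by
          have hroot : IsRoot (g - C t) t := by simp [IsRoot, hgt]
          have hd1 := derivative_rootMultiplicity_of_root hroot
          have hd2 : (g - C t).derivative = g.derivative := by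
            simp [derivative_sub]
          rw [hd2, ← hm] at hd1
          have hpos' : 0 < rootMultiplicity t g.derivative := by omega
          exact (rootMultiplicity_pos'.mp hpos').2
        have hct : c ≠ C t := by
          intro hcC
          exact hc ⟨t, hcC, p, hp0, hpt, hgram⟩
        have hcne : c - C t ≠ 0 := sub_ne_zero.mpr hct
        set s := rootMultiplicity lam (c - C t) with hs
        refine ⟨s + (Finset.range s).sup
          (fun j => rootMultiplicity lam (polyIter q (p * j + n0) - c)), fun n hn hne => ?_⟩
        by_cases hnt : (polyIter q n).eval lam = t
        · obtain ⟨j, rfl⟩ := hchar n hn hnt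
          by_cases hj : j < s
          · have h4 : rootMultiplicity lam (polyIter q (p * j + n0) - c) ≤
                (Finset.range s).sup
                  (fun j => rootMultiplicity lam (polyIter q (p * j + n0) - c)) :=
              Finset.le_sup (f := fun j => rootMultiplicity lam (polyIter q (p * j + n0) - c))
                (Finset.mem_range.mpr hj)
            omega
          · push_neg at hj
            have hbig : s + 1 ≤ rootMultiplicity lam (polyIter q (p * j + n0) - C t) := by
              rw [hval j]
              calc s + 1 ≤ j + 1 := by omega
              _ ≤ 2 ^ j := Nat.lt_two_pow_self (n := j)
              _ ≤ m ^ j := Nat.pow_le_pow_left hm2 j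
              _ ≤ m ^ j * e := Nat.le_mul_of_pos_right _ (by omega)
            have hcn : polyIter q (p * j + n0) - c ≠ 0 := sub_ne_zero.mpr hne
            have hle : rootMultiplicity lam (polyIter q (p * j + n0) - c) ≤ s := by
              rw [rootMultiplicity_le_iff hcn]
              intro hdvd
              have hdvd2 : (X - C lam) ^ (s + 1) ∣ polyIter q (p * j + n0) - C t := by
                refine dvd_trans (pow_dvd_pow _ hbig) (pow_rootMultiplicity_dvd _ _)
              have hdvd3 : (X - C lam) ^ (s + 1) ∣ c - C t := by
                have h5 := dvd_sub hdvd2 hdvd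
                have h6 : (polyIter q (p * j + n0) - C t) - (polyIter q (p * j + n0) - c)
                    = c - C t := by ring
                rwa [h6] at h5
              have h7 := (le_rootMultiplicity_iff hcne).mpr hdvd3
              omega
            omega
        · rw [hrm0 n hnt]
          exact Nat.zero_le _
      · -- unramified cycle case: m = 1
        have hm1' : m = 1 := by omega
        obtain ⟨B, hB⟩ := exists_iter_fixed_rm_bound hgd hgt
        have hvalE : ∀ j : ℕ, rootMultiplicity lam (polyIter q (p * j + n0) - C t) = e := by
          intro j
          rw [hval j, hm1', one_pow, one_mul]
        have hev : ∀ j : ℕ, (polyIter q (p * j + n0)).eval lam = t := by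
          intro j
          rw [polyIter_add, eval_comp, ← hf, hft, hfix]
        have hdiff : ∀ j k : ℕ, 0 < k →
            rootMultiplicity lam (polyIter q (p * (j + k) + n0) - polyIter q (p * j + n0))
              ≤ B * e := by
          intro j k hk
          have hrew : polyIter q (p * (j + k) + n0) - polyIter q (p * j + n0)
              = (polyIter g k - X).comp (polyIter q (p * j + n0)) := by
            rw [sub_comp, X_comp]
            congr 1
            rw [hg, ← polyIter_mul, ← polyIter_add]
            congr 1
            ring
          have hne2 : (polyIter g k - X).comp (polyIter q (p * j + n0)) ≠ 0 := by
            rw [← hrew]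
            apply sub_ne_zero.mpr
            exact polyIter_ne_polyIter hq (by
              intro hEq
              have hexp : p * (j + k) = p * j + p * k := by ring
              have hpk := Nat.mul_pos hp0 hk
              omega)
          rw [hrew, rootMultiplicity_comp _ _ hne2, hev j]
          exact Nat.mul_le_mul (hB k hk) (le_of_eq (hvalE j))
        by_cases hex : ∃ nn : ℕ, 0 < nn ∧ B * e < rootMultiplicity lam (polyIter q nn - c)
        · obtain ⟨n1, hn1pos, hn1big⟩ := hex
          refine ⟨B * e + rootMultiplicity lam (polyIter q n1 - c), fun n hn hne => ?_⟩
          by_cases hle : rootMultiplicity lam (polyIter q n - c) ≤ B * e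
          · omega
          · push_neg at hle
            rcases eq_or_ne n n1 with rfl | hne'
            · omega
            · exfalso
              have hroot : ∀ nn : ℕ, 0 < nn →
                  B * e < rootMultiplicity lam (polyIter q nn - c) →
                  (polyIter q nn).eval lam = t := by
                intro nn hpos hbig
                by_contra hno
                rw [hrm0 nn hno] at hbig
                omega
              obtain ⟨j, hj⟩ := hchar n hn (hroot n hn hle)
              obtain ⟨j1, hj1⟩ := hchar n1 hn1pos (hroot n1 hn1pos hn1big)
              have key : ∀ a b : ℕ, a < b →
                  B * e < rootMultiplicity lam (polyIter q (p * a + n0) - c) →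
                  B * e < rootMultiplicity lam (polyIter q (p * b + n0) - c) → False := by
                intro a b hab ha hb
                set D := polyIter q (p * b + n0) - polyIter q (p * a + n0) with hD
                have hDne : D ≠ 0 := by
                  rw [hD]
                  apply sub_ne_zero.mpr
                  exact polyIter_ne_polyIter hq (by
                    intro hEq
                    have h7 : p * b = p * a := by omega
                    have h8 := Nat.eq_of_mul_eq_mul_left hp0 h7
                    omega)
                have hDrm : rootMultiplicity lam D ≤ B * e := by
                  have h8 := hdiff a (b - a) (by omega)
                  rwa [show a + (b - a) = b by omega] at h8
                have hdvd1 : (X - C lam) ^ (B * e + 1) ∣ polyIter q (p * a + n0) - c :=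
                  dvd_trans (pow_dvd_pow _ (by omega)) (pow_rootMultiplicity_dvd _ _)
                have hdvd2 : (X - C lam) ^ (B * e + 1) ∣ polyIter q (p * b + n0) - c :=
                  dvd_trans (pow_dvd_pow _ (by omega)) (pow_rootMultiplicity_dvd _ _)
                have hdvdD : (X - C lam) ^ (B * e + 1) ∣ D := by
                  have h9 := dvd_sub hdvd2 hdvd1
                  have h10 : (polyIter q (p * b + n0) - c) - (polyIter q (p * a + n0) - c)
                      = D := by rw [hD]; ring
                  rwa [h10] at h9
                have h11 := (le_rootMultiplicity_iff hDne).mpr hdvdD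
                omega
              rcases lt_trichotomy j j1 with h12 | h12 | h12
              · exact key j j1 h12 (hj ▸ hle) (hj1 ▸ hn1big)
              · exact hne' (by rw [hj, hj1, h12])
              · exact key j1 j h12 (hj1 ▸ hn1big) (hj ▸ hle)
        · push_neg at hex
          exact ⟨B * e, fun n hn _ => hex n hn⟩
    · -- lam never hits t
      push_neg at hS
      refine ⟨0, fun n hn _ => ?_⟩
      rw [hrm0 n (hS n hn)]
  · -- t is not periodic: at most one hitting time
    by_cases hS : ∃ n : ℕ, 0 < n ∧ (polyIter q n).eval lam = t
    · obtain ⟨n1, hn1, hn1t⟩ := hS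
      refine ⟨rootMultiplicity lam (polyIter q n1 - c), fun n hn hne => ?_⟩
      by_cases hnt : (polyIter q n).eval lam = t
      · have haux : ∀ a b : ℕ, a < b → (polyIter q a).eval lam = t →
            (polyIter q b).eval lam = t → False := by
          intro a b hab hat hbt
          refine hper ⟨b - a, by omega, ?_⟩
          have h2 : (polyIter q (b - a + a)).eval lam = t := by
            rw [show b - a + a = b by omega]
            exact hbt
          rwa [polyIter_add, eval_comp, hat] at h2
        have hEq : n = n1 := by
          rcases lt_trichotomy n n1 with h | h | h
          · exact absurd (haux n n1 h hnt hn1t) (by simp)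
          · exact h
          · exact absurd (haux n1 n h hn1t hnt) (by simp)
        rw [hEq]
      · rw [hrm0 n hnt]
        exact Nat.zero_le _
    · push_neg at hS
      refine ⟨0, fun n hn _ => ?_⟩
      rw [hrm0 n (hS n hn)]
end
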